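/- Let ω_{n−1}⋯ω_1ω_0 be a semi-standard decomposition of an element of W with respect to some J ⊆ S. Then for each 0 ≤ i ≤ n−1 there exists an element of Π_{K^{(i)} ∖ {t^{(i)}}} that is not fixed by ω_i. -/

import Mathlib

open scoped Classical Pointwise

noncomputable section

namespace CoxeterCentralizer

/-- The geometric representation space `V`: formal `ℝ`-linear combinations of
the simple roots `α_s`, `s ∈ S`. -/
abbrev GV (S : Type*) := S →₀ ℝ

variable {S W : Type*} [Group W]

/-- The simple root `α_s`. -/
def alpha (s : S) : GV S := Finsupp.single s 1

/-- The value `⟨α_s, α_t⟩ = - cos (π / m(s,t))` of the bilinear form on simple roots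
(`m(s,t) = 0` encodes `m(s,t) = ∞`, where the value is `-1`). -/
def cform (M : CoxeterMatrix S) (s t : S) : ℝ :=
  if M s t = 0 then -1 else -Real.cos (Real.pi / (M s t : ℝ))

/-- The symmetric bilinear form `⟨·,·⟩` on the geometric representation space. -/
def form (M : CoxeterMatrix S) (v w : GV S) : ℝ :=
  v.sum fun s a => w.sum fun t b => a * b * cform M s t

/-- The property that a given action of `W` on `V` is the standard geometric
representation: each simple reflection acts by `s • v = v - 2⟨α_s, v⟩ α_s`. -/
def GeomAction (M : CoxeterMatrix S) (cs : CoxeterSystem M W) [MulAction W (GV S)] : Prop :=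
  ∀ (s : S) (v : GV S), cs.simple s • v = v - (2 * form M (alpha s) v) • alpha s

/-- The root system `Φ = W · Π`. -/
def Phi (M : CoxeterMatrix S) (cs : CoxeterSystem M W) [MulAction W (GV S)] : Set (GV S) :=
  {v | ∃ (w : W) (s : S), v = w • alpha s}

/-- The set of positive roots `Φ⁺ = Φ ∩ ℝ_{≥0} Π`. -/
def PhiPos (M : CoxeterMatrix S) (cs : CoxeterSystem M W) [MulAction W (GV S)] : Set (GV S) :=
  {v ∈ Phi M cs | ∀ s, 0 ≤ v s}

/-- `Φ_J`, the roots supported on `J`. -/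
def PhiIn (M : CoxeterMatrix S) (cs : CoxeterSystem M W) [MulAction W (GV S)]
    (J : Set S) : Set (GV S) :=
  {v ∈ Phi M cs | ∀ s, s ∉ J → v s = 0}

/-- `Φ_J^{⊥K}`, the roots supported on `J` orthogonal to all `α_s`, `s ∈ K`. -/
def PhiPerp (M : CoxeterMatrix S) (cs : CoxeterSystem M W) [MulAction W (GV S)]
    (J K : Set S) : Set (GV S) :=
  {v ∈ PhiIn M cs J | ∀ s ∈ K, form M v (alpha s) = 0}

/-- The reflection `s_γ = w s w⁻¹` along a root `γ = w • α_s`. -/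
def sref (M : CoxeterMatrix S) (cs : CoxeterSystem M W) [MulAction W (GV S)]
    (γ : GV S) : W :=
  if h : ∃ (w : W) (s : S), γ = w • alpha s then
    h.choose * cs.simple h.choose_spec.choose * h.choose⁻¹
  else 1

/-- The (standard) parabolic subgroup `W_I`. -/
def WP (M : CoxeterMatrix S) (cs : CoxeterSystem M W) (I : Set S) : Subgroup W :=
  Subgroup.closure (cs.simple '' I)

/-- `I ⊆ S` is of finite type if `W_I` is finite. -/
def FiniteType (M : CoxeterMatrix S) (cs : CoxeterSystem M W) (I : Set S) : Prop :=
  (WP M cs I : Set W).Finite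

/-- Adjacency in the Coxeter graph: `s` and `t` are joined by an edge iff `m(s,t) ≥ 3`
(including `m(s,t) = ∞`, encoded as `0`). -/
def Adj (M : CoxeterMatrix S) (s t : S) : Prop := 3 ≤ M s t ∨ M s t = 0

/-- `J` is adjacent to `K` if some element of `J` is joined by an edge to some element of `K`. -/
def AdjSets (M : CoxeterMatrix S) (J K : Set S) : Prop := ∃ s ∈ J, ∃ t ∈ K, Adj M s t

/-- `J` is apart from `K` if they are disjoint and not adjacent. -/
def Apart (M : CoxeterMatrix S) (J K : Set S) : Prop := J ∩ K = ∅ ∧ ¬ AdjSets M J K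

/-- Connectivity within `C ⊆ S` in the Coxeter graph. -/
def ConnIn (M : CoxeterMatrix S) (C : Set S) (s t : S) : Prop :=
  Relation.ReflTransGen (fun a b => b ∈ C ∧ Adj M a b) s t

/-- `C ⊆ S` is irreducible: nonempty and its induced Coxeter graph is connected. -/
def IsIrreducible (M : CoxeterMatrix S) (C : Set S) : Prop :=
  C.Nonempty ∧ ∀ s ∈ C, ∀ t ∈ C, ConnIn M C s t

/-- `D` is an irreducible component of `C`: a connected component of the Coxeter
graph induced on `C`. -/
def IsComponent (M : CoxeterMatrix S) (C D : Set S) : Prop :=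
  ∃ s ∈ C, D = {t ∈ C | ConnIn M C s t}

/-- The Coxeter matrix of type `A_n` (standard labelling, `0`-indexed). -/
def AMat (n : ℕ) : Fin n → Fin n → ℕ := fun i j =>
  if i = j then 1 else if i.1 + 1 = j.1 ∨ j.1 + 1 = i.1 then 3 else 2

/-- `C ⊆ S` is of the type given by the labelled Coxeter matrix `A` on `Fin n`. -/
def IsGraphType (M : CoxeterMatrix S) {n : ℕ} (A : Fin n → Fin n → ℕ) (C : Set S) : Prop :=
  ∃ r : Fin n → S, Function.Injective r ∧ C = Set.range r ∧ ∀ i j, M (r i) (r j) = A i j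

/-- `I` is `A_{>1}`-free: it has no irreducible component of type `A_n`, `2 ≤ n < ∞`. -/
def AFree (M : CoxeterMatrix S) (I : Set S) : Prop :=
  ∀ C, IsComponent M I C → ∀ n, 2 ≤ n → ¬ IsGraphType M (AMat n) C

/-- The reflection subgroup `W(Ψ)` generated by the reflections along the roots in `Ψ`. -/
def WRefl (M : CoxeterMatrix S) (cs : CoxeterSystem M W) [MulAction W (GV S)]
    (Ψ : Set (GV S)) : Subgroup W :=
  Subgroup.closure (sref M cs '' Ψ)

/-- The "root system" `W(Ψ) · Ψ` of the reflection subgroup `W(Ψ)`. -/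
def orb (M : CoxeterMatrix S) (cs : CoxeterSystem M W) [MulAction W (GV S)]
    (Ψ : Set (GV S)) : Set (GV S) :=
  {v | ∃ w ∈ WRefl M cs Ψ, ∃ γ ∈ Ψ, v = w • γ}

/-- The positive part `(W(Ψ) · Ψ)⁺` of the root system of `W(Ψ)`. -/
def orbPos (M : CoxeterMatrix S) (cs : CoxeterSystem M W) [MulAction W (GV S)]
    (Ψ : Set (GV S)) : Set (GV S) :=
  {v ∈ orb M cs Ψ | ∀ s, 0 ≤ v s}

/-- The simple system `Π(Ψ)` of the reflection subgroup `W(Ψ)`: those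
`γ ∈ (W(Ψ)·Ψ)⁺` such that any expression `γ = Σ c_i • β_i` with `c_i > 0` and
`β_i ∈ (W(Ψ)·Ψ)⁺` forces `β_i = γ` for all `i`. -/
def simpleSys (M : CoxeterMatrix S) (cs : CoxeterSystem M W) [MulAction W (GV S)]
    (Ψ : Set (GV S)) : Set (GV S) :=
  {γ ∈ orbPos M cs Ψ |
    ∀ (n : ℕ) (c : Fin n → ℝ) (β : Fin n → GV S),
      (∀ i, 0 < c i) → (∀ i, β i ∈ orbPos M cs Ψ) → γ = ∑ i, c i • β i →
      ∀ i, β i = γ}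

/-- The simple system `Π^{J,K} = Π(Φ_J^{⊥K})`. -/
def PiPerp (M : CoxeterMatrix S) (cs : CoxeterSystem M W) [MulAction W (GV S)]
    (J K : Set S) : Set (GV S) :=
  simpleSys M cs (PhiPerp M cs J K)

/-- The simple system `Π^I = Π(Φ^{⊥I})` of `W^{⊥I}`. -/
def PiI (M : CoxeterMatrix S) (cs : CoxeterSystem M W) [MulAction W (GV S)]
    (I : Set S) : Set (GV S) :=
  PiPerp M cs Set.univ I

/-- The subgroup `C_I = {w ∈ W : w • α_s = α_s for all s ∈ I}` (as a set). -/
def CIset (M : CoxeterMatrix S) (cs : CoxeterSystem M W) [MulAction W (GV S)]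
    (I : Set S) : Set W :=
  {w : W | ∀ s ∈ I, w • alpha s = alpha s}

/-- The subgroup `Y_I = {w ∈ C_I : w • (Φ^{⊥I})⁺ ⊆ Φ⁺}` (as a set). -/
def YIset (M : CoxeterMatrix S) (cs : CoxeterSystem M W) [MulAction W (GV S)]
    (I : Set S) : Set W :=
  {w ∈ CIset M cs I |
    ∀ γ ∈ PhiPerp M cs Set.univ I ∩ PhiPos M cs, w • γ ∈ PhiPos M cs}

/-- Adjacency of two simple roots of a reflection subgroup, in the Coxeter graph of the
reflection subgroup: the corresponding reflections do not commute. -/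
def RootAdj (M : CoxeterMatrix S) (cs : CoxeterSystem M W) [MulAction W (GV S)]
    (β β' : GV S) : Prop :=
  β ≠ β' ∧ sref M cs β * sref M cs β' ≠ sref M cs β' * sref M cs β

/-- Connectivity within a set `P` of roots in the Coxeter graph of the reflection
subgroup generated by the reflections along roots in `P`. -/
def RootConnIn (M : CoxeterMatrix S) (cs : CoxeterSystem M W) [MulAction W (GV S)]
    (P : Set (GV S)) (β β' : GV S) : Prop :=
  Relation.ReflTransGen (fun a b => b ∈ P ∧ RootAdj M cs a b) β β'

/-- The irreducible component of the simple system `P` containing the root `β`. -/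
def RootComp (M : CoxeterMatrix S) (cs : CoxeterSystem M W) [MulAction W (GV S)]
    (P : Set (GV S)) (β : GV S) : Set (GV S) :=
  {β' ∈ P | RootConnIn M cs P β β'}

/-- `C` is an irreducible component of the simple system `P`. -/
def IsRootComponent (M : CoxeterMatrix S) (cs : CoxeterSystem M W) [MulAction W (GV S)]
    (P C : Set (GV S)) : Prop :=
  ∃ β ∈ P, C = RootComp M cs P β

/-- The finite part `W^{⊥I}_fin` of the Coxeter system `(W^{⊥I}, R^I)`:
the subgroup generated by the finite irreducible components of `W^{⊥I}`. -/
def PerpFin (M : CoxeterMatrix S) (cs : CoxeterSystem M W) [MulAction W (GV S)]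
    (I : Set S) : Subgroup W :=
  Subgroup.closure (sref M cs ''
    {β ∈ PiI M cs I | ((WRefl M cs (RootComp M cs (PiI M cs I) β) : Set W)).Finite})

/-- The infinite part `W^{⊥I}_inf` of the Coxeter system `(W^{⊥I}, R^I)`:
the subgroup generated by the infinite irreducible components of `W^{⊥I}`. -/
def PerpInf (M : CoxeterMatrix S) (cs : CoxeterSystem M W) [MulAction W (GV S)]
    (I : Set S) : Subgroup W :=
  Subgroup.closure (sref M cs ''
    {β ∈ PiI M cs I | ¬ ((WRefl M cs (RootComp M cs (PiI M cs I) β) : Set W)).Finite})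

/-- `Π_J`, the set of simple roots with index in `J`. -/
def alphaSet (J : Set S) : Set (GV S) := alpha '' J

/-- `P` is a basis of the span of `T`. -/
def IsBasisOfSpan (P T : Set (GV S)) : Prop :=
  LinearIndependent ℝ (fun v : ↥P => (v : GV S)) ∧
    Submodule.span ℝ P = Submodule.span ℝ T

/-- The longest element `w_0(L)` of a finite parabolic subgroup `W_L`. -/
def w0 (M : CoxeterMatrix S) (cs : CoxeterSystem M W) (L : Set S) : W :=
  if h : ∃ w ∈ WP M cs L, ∀ u ∈ WP M cs L, cs.length u ≤ cs.length w then h.choose else 1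

/-- `J_{∼K}`: the set of elements of `J ∪ K` lying in the same connected component of the
Coxeter graph induced on `J ∪ K` as some element of `K`. -/
def sTilde (M : CoxeterMatrix S) (J K : Set S) : Set S :=
  {s ∈ J ∪ K | ∃ t ∈ K, ConnIn M (J ∪ K) t s}

/-- `S^{(Λ)}`: the set of injective maps (duplicate-free `Λ`-tuples) `Λ → S`. -/
def SInj (S Λ : Type*) := {x : Λ → S // Function.Injective x}

/-- `[x]`: the image of the tuple `x ∈ S^{(Λ)}`. -/
def rng {S Λ : Type*} (x : SInj S Λ) : Set S := Set.range x.1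

/-- `C_{x,y} = {w ∈ W : α_{x_λ} = w • α_{y_λ} for all λ}`. -/
def Cpair (M : CoxeterMatrix S) (cs : CoxeterSystem M W) [MulAction W (GV S)]
    {Λ : Type*} (x y : SInj S Λ) : Set W :=
  {w : W | ∀ l : Λ, w • alpha (y.1 l) = alpha (x.1 l)}

/-- `Y_{x,y} = {w ∈ C_{x,y} : w • (Φ^{⊥[y]})⁺ ⊆ Φ⁺}`. -/
def Ypair (M : CoxeterMatrix S) (cs : CoxeterSystem M W) [MulAction W (GV S)]
    {Λ : Type*} (x y : SInj S Λ) : Set W :=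
  {w ∈ Cpair M cs x y |
    ∀ γ ∈ PhiPerp M cs Set.univ (rng y) ∩ PhiPos M cs, w • γ ∈ PhiPos M cs}

/-- A semi-standard decomposition `u = ω_{n-1} ⋯ ω_1 ω_0` of an element `u ∈ Y_{z,y}`
with respect to `J ⊆ S`, with data `y^{(i)}`, `t^{(i)}`, `J^{(i)}`, supports
`K^{(i)} = ([y^{(i)}] ∪ J^{(i)})_{∼ t^{(i)}}` and
`ω_i = w_0(K^{(i)}) w_0(K^{(i)} ∖ {t^{(i)}})`. -/
structure SemiStd {S W : Type*} [Group W] (M : CoxeterMatrix S) (cs : CoxeterSystem M W)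
    [MulAction W (GV S)] (Λ : Type*) (u : W) (y z : SInj S Λ) (J : Set S) where
  n : ℕ
  ys : Fin (n + 1) → SInj S Λ
  ts : Fin n → S
  Js : Fin (n + 1) → Set S
  Ks : Fin n → Set S
  om : Fin n → W
  h_y0 : ys 0 = y
  h_yn : ys (Fin.last n) = z
  h_J0 : Js 0 = J
  h_K : ∀ i, Ks i = sTilde M (rng (ys i.castSucc) ∪ Js i.castSucc) {ts i}
  h_om : ∀ i, om i = w0 M cs (Ks i) * w0 M cs (Ks i \ {ts i})
  h_t_notin : ∀ i, ts i ∉ rng (ys i.castSucc) ∪ Js i.castSucc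
  h_t_adj : ∀ i, AdjSets M {ts i} (rng (ys i.castSucc))
  h_K_fin : ∀ i, FiniteType M cs (Ks i)
  h_Y : ∀ i, om i ∈ Ypair M cs (ys i.succ) (ys i.castSucc)
  h_J_map : ∀ i, (fun v => om i • v) '' alphaSet (Js i.castSucc) = alphaSet (Js i.succ)
  h_prod : u = (List.ofFn om).reverse.prod

variable {Λ : Type*} {M : CoxeterMatrix S} {cs : CoxeterSystem M W} [MulAction W (GV S)]

/-- `ω_i` is a wide transformation: its support intersects `J^{(i)} ∖ [y^{(i)}]`. -/
def SemiStd.Wide {u : W} {y z : SInj S Λ} {J : Set S} (D : SemiStd M cs Λ u y z J)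
    (i : Fin D.n) : Prop :=
  (D.Ks i ∩ (D.Js i.castSucc \ rng (D.ys i.castSucc))).Nonempty

/-- A semi-standard decomposition is standard if the lengths add up:
`ℓ(u) = Σ_j ℓ(ω_j)`. -/
def SemiStd.IsStd {u : W} {y z : SInj S Λ} {J : Set S} (D : SemiStd M cs Λ u y z J) : Prop :=
  cs.length u = ∑ i : Fin D.n, cs.length (D.om i)


/-!
Suppose `ω = ω_i` fixed every `α_s`, `s ∈ K ∖ {t}`, where `K = K^{(i)}` and `t = t^{(i)}`.
Since `ω ∈ W_K` is nontrivial (it sends `α_t` to a negative root) and `W_K` is finite, a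
Steinberg-type argument produces a positive root `γ` of `W_K` orthogonal to all these `α_s`:
move a generic point `p` of their span into the dominant chamber of `W_K`; a left descent of
the conjugate of `ω` fixing it yields a root orthogonal to `p`, hence to the whole span.
Then `γ` has positive `α_t`-coordinate (as `⟨γ, γ⟩ = 1`), so `ω = w_0(K) w_0(K ∖ {t})` sends
it to a negative root. But `K` is a connected component of `[y^{(i)}] ∪ J^{(i)} ∪ {t}` and
`t ∉ [y^{(i)}]`, so `γ ⊥ Π_{[y^{(i)}]}`, and `ω ∈ Y_{y^{(i+1)}, y^{(i)}}` must send `γ` to a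
positive root. The signs of roots come from the positivity theorem for the geometric
representation (Humphreys, *Reflection groups and Coxeter groups*, 5.4), whose proof reduces
to dihedral parabolic subgroups.
-/

end CoxeterCentralizer

namespace CoxeterCentralizer

variable {S W : Type*} [Group W] {M : CoxeterMatrix S} {cs : CoxeterSystem M W}

lemma cform_self (s : S) : cform M s s = 1 := by
  simp [cform, Real.cos_pi]

lemma cform_comm (s t : S) : cform M s t = cform M t s := by
  rw [cform, cform, M.symmetric s t]

lemma cform_eq_zero_of_not_adj {s t : S} (hst : s ≠ t) (h : ¬ Adj M s t) : cform M s t = 0 := by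
  have : M s t = 2 := by
    have := M.off_diagonal s t hst
    simp only [Adj, not_or, not_le] at h
    omega
  simp [cform, this]

def formBilin (M : CoxeterMatrix S) : LinearMap.BilinForm ℝ (GV S) :=
  Finsupp.lsum ℝ fun s => LinearMap.smulRight LinearMap.id
    (Finsupp.lsum ℝ fun t => cform M s t • LinearMap.id)

lemma formBilin_apply (v w : GV S) : formBilin M v w = form M v w := by
  simp [formBilin, form, Finsupp.lsum_apply, Finsupp.mul_sum, mul_comm, mul_left_comm]

lemma form_comm (v w : GV S) : form M v w = form M w v := by
  simp only [form, Finsupp.sum]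
  rw [Finset.sum_comm]
  exact Finset.sum_congr rfl fun t _ => Finset.sum_congr rfl fun s _ => by
    rw [cform_comm]; ring

lemma form_add_right (v w₁ w₂ : GV S) : form M v (w₁ + w₂) = form M v w₁ + form M v w₂ := by
  simp only [← formBilin_apply, map_add]

lemma form_smul_right (r : ℝ) (v w : GV S) : form M v (r • w) = r * form M v w := by
  simp only [← formBilin_apply, map_smul, smul_eq_mul]

lemma form_alpha_alpha (s t : S) : form M (alpha s) (alpha t) = cform M s t := by
  simp [form, alpha]

lemma form_sub_smul_sub_smul (a b : ℝ) (x u v : GV S) :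
    form M (u - a • x) (v - b • x) =
      form M u v - b * form M u x - a * form M x v + a * b * form M x x := by
  simp only [← formBilin_apply, map_sub, map_smul, LinearMap.sub_apply, LinearMap.smul_apply,
    smul_eq_mul]
  ring

lemma alpha_apply_self (s : S) : alpha s s = 1 := by simp [alpha]

lemma alpha_apply_of_ne {s r : S} (h : r ≠ s) : alpha s r = 0 := by
  simp [alpha, Ne.symm h]

lemma alpha_nonneg (s : S) : 0 ≤ alpha s := by simp [alpha]

lemma alpha_mem_supported {K : Set S} {s : S} (hs : s ∈ K) : alpha s ∈ Finsupp.supported ℝ ℝ K :=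
  Finsupp.single_mem_supported ℝ 1 hs

lemma sum_smul_alpha (v : GV S) : (v.sum fun k a => a • alpha k) = v := by
  simp [alpha, Finsupp.smul_single, Finsupp.sum_single]

lemma form_eq_sum_right (v w : GV S) :
    form M v w = w.sum fun k a => a * form M v (alpha k) := by
  conv_lhs => rw [← formBilin_apply, ← sum_smul_alpha w, map_finsuppSum]
  simp [formBilin_apply]

lemma form_eq_sum_left (v w : GV S) :
    form M v w = v.sum fun k a => a * form M (alpha k) w := by
  rw [form_comm, form_eq_sum_right]
  simp_rw [form_comm]

lemma exists_mem_forall_form_ne_zero {N : Set (GV S)} (hN : N.Finite) (H : Submodule ℝ (GV S)) :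
    ∃ p ∈ H, ∀ γ ∈ N, (∃ h ∈ H, form M γ h ≠ 0) → form M γ p ≠ 0 := by
  have := hN.to_subtype
  obtain ⟨p, hp, hne⟩ := Module.Dual.exists_forall_mem_ne_zero_of_forall_exists H
    (fun γ : {γ : N // ∃ h ∈ H, form M γ h ≠ 0} => formBilin M γ)
    (fun γ => by simpa [formBilin_apply] using γ.2)
  exact ⟨p, hp, fun γ hγ hex => by simpa [formBilin_apply] using hne ⟨⟨γ, hγ⟩, hex⟩⟩

lemma mem_sTilde_of_adj {C : Set S} {t k r : S} (hk : k ∈ sTilde M C {t}) (hr : r ∈ C ∪ {t})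
    (hadj : Adj M k r) : r ∈ sTilde M C {t} := by
  obtain ⟨-, t', ht', hconn⟩ := hk
  exact ⟨hr, t', ht', hconn.tail ⟨hr, hadj⟩⟩

lemma form_alpha_eq_zero_of_mem_sTilde {C : Set S} {t r : S} {γ : GV S}
    (hγ : γ ∈ Finsupp.supported ℝ ℝ (sTilde M C {t}))
    (hperp : ∀ s ∈ sTilde M C {t} \ {t}, form M γ (alpha s) = 0) (hr : r ∈ C) (hrt : r ≠ t) :
    form M γ (alpha r) = 0 := by
  by_cases hrK : r ∈ sTilde M C {t}
  · exact hperp r ⟨hrK, hrt⟩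
  rw [form_eq_sum_left]
  refine Finset.sum_eq_zero fun k hk => ?_
  have hkK : k ∈ sTilde M C {t} := (Finsupp.mem_supported ℝ γ).mp hγ hk
  have hkr : k ≠ r := by rintro rfl; exact hrK hkK
  dsimp only
  rw [form_alpha_alpha, cform_eq_zero_of_not_adj hkr fun hadj =>
    hrK (mem_sTilde_of_adj hkK (Or.inl hr) hadj), mul_zero]

/-- With `c = -⟨α_i, α_j⟩ = cos (π / m(i,j))`, `U_n(c) = sin ((n + 1) π / m) / sin (π / m)`
(and `U_n(1) = n + 1` when `m = ∞`): the coefficients of the roots of the dihedral subsystem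
on `α_i, α_j`. -/
def dihedralCoeff (M : CoxeterMatrix S) (i j : S) (n : ℤ) : ℝ :=
  (Polynomial.Chebyshev.U ℝ n).eval (-cform M i j)

def dihedralRoot (M : CoxeterMatrix S) (i j : S) (n : ℤ) : GV S :=
  dihedralCoeff M i j n • alpha i + dihedralCoeff M i j (n - 1) • alpha j

lemma dihedralRoot_add_one (i j : S) (n : ℤ) :
    dihedralRoot M i j (n + 1) =
      (-2 * cform M i j) • dihedralRoot M i j n - dihedralRoot M i j (n - 1) := by
  have h (m : ℤ) : dihedralCoeff M i j (m + 1) =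
      -2 * cform M i j * dihedralCoeff M i j m - dihedralCoeff M i j (m - 1) := by
    simp [dihedralCoeff, Polynomial.Chebyshev.U_add_one]
  have h' := h (n - 1)
  rw [sub_add_cancel] at h'
  rw [dihedralRoot, dihedralRoot, dihedralRoot, add_sub_cancel_right, h n, h']
  module

lemma dihedralCoeff_nonneg {i j : S} (hij : i ≠ j) {n : ℤ} (hn : -1 ≤ n)
    (hm : M i j = 0 ∨ n + 1 ≤ M i j) : 0 ≤ dihedralCoeff M i j n := by
  by_cases h0 : M i j = 0
  · simp [dihedralCoeff, cform, h0, Polynomial.Chebyshev.U_eval_one]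
    exact_mod_cast (by omega : (0 : ℤ) ≤ n + 1)
  have hle : (n + 1 : ℝ) ≤ M i j := by exact_mod_cast hm.resolve_left h0
  have hm2 : (2 : ℝ) ≤ M i j := by
    have := M.off_diagonal i j hij
    exact_mod_cast (by omega : 2 ≤ M i j)
  set θ := Real.pi / M i j
  have hθ : 0 < θ := by positivity
  have hsin : 0 < Real.sin θ := Real.sin_pos_of_pos_of_lt_pi hθ (by
    rw [div_lt_iff₀ (by positivity)]; nlinarith [Real.pi_pos])
  have hsin' : 0 ≤ Real.sin ((n + 1) * θ) := by
    apply Real.sin_nonneg_of_nonneg_of_le_pi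
    · have : (0 : ℝ) ≤ n + 1 := by exact_mod_cast (by omega : (0 : ℤ) ≤ n + 1)
      positivity
    · calc (n + 1) * θ ≤ M i j * θ := by gcongr
        _ = Real.pi := mul_div_cancel₀ _ (by positivity)
  rw [← Polynomial.Chebyshev.U_real_cos] at hsin'
  have : -cform M i j = Real.cos θ := by simp [cform, h0, θ]
  rw [dihedralCoeff, this]
  exact nonneg_of_mul_nonneg_left hsin' hsin

lemma dihedralRoot_nonneg {i j : S} (hij : i ≠ j) {n : ℤ} (hn : 0 ≤ n)
    (hm : M i j = 0 ∨ n + 1 ≤ M i j) : 0 ≤ dihedralRoot M i j n := by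
  have hm' : M i j = 0 ∨ n - 1 + 1 ≤ M i j := by omega
  exact add_nonneg (smul_nonneg (dihedralCoeff_nonneg hij (by omega) hm) (alpha_nonneg i))
    (smul_nonneg (dihedralCoeff_nonneg hij (by omega) hm') (alpha_nonneg j))

lemma simple_mem_WP {X : Set S} {r : S} (hr : r ∈ X) : cs.simple r ∈ WP M cs X :=
  Subgroup.subset_closure ⟨r, hr, rfl⟩

lemma WP_mono {X Y : Set S} (h : X ⊆ Y) : WP M cs X ≤ WP M cs Y :=
  Subgroup.closure_mono (Set.image_mono h)

lemma exists_parabolic_factorization (X : Set S) (w : W) :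
    ∃ v x, w = v * x ∧ x ∈ WP M cs X ∧ cs.length v + cs.length x = cs.length w ∧
      ∀ r ∈ X, cs.length (v * cs.simple r) = cs.length v + 1 := by
  set A := {v : W | v⁻¹ * w ∈ WP M cs X ∧ cs.length v + cs.length (v⁻¹ * w) = cs.length w}
  obtain ⟨v, ⟨hvX, hvlen⟩, hmin⟩ :=
    (measure cs.length).wf.has_min A ⟨w, by simp [A, one_mem]⟩
  refine ⟨v, v⁻¹ * w, by group, hvX, hvlen, fun r hr => ?_⟩
  refine (cs.length_mul_simple v r).resolve_right fun hdesc => hmin (v * cs.simple r) ⟨?_, ?_⟩ ?_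
  · rw [mul_inv_rev, cs.inv_simple, mul_assoc]
    exact mul_mem (simple_mem_WP hr) hvX
  · have hw : w = v * cs.simple r * (cs.simple r * (v⁻¹ * w)) := by
      simp [mul_assoc]
    have h1 := cs.length_mul_le (v * cs.simple r) (cs.simple r * (v⁻¹ * w))
    have h2 := cs.length_mul_le (cs.simple r) (v⁻¹ * w)
    rw [← hw] at h1
    rw [cs.length_simple] at h2
    rw [mul_inv_rev, cs.inv_simple, mul_assoc]
    omega
  · show cs.length (v * cs.simple r) < cs.length v
    omega

open CoxeterSystem in
lemma eq_wordProd_alternatingWord {i j : S} {k : ℕ} {w : W} (hw : w ∈ WP M cs {i, j})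
    (hlen : cs.length w = k) (hi : cs.length (w * cs.simple i) = k + 1)
    (hdesc : ∀ w' ∈ WP M cs {i, j}, cs.length w' ≤ k → ∀ u : S,
      cs.IsRightDescent w' u → u = i ∨ u = j) :
    w = cs.wordProd (alternatingWord i j k) := by
  induction k generalizing i j w with
  | zero => simp [cs.length_eq_zero_iff.mp hlen, alternatingWord]
  | succ k ih =>
    obtain ⟨u, hu⟩ := cs.exists_rightDescent_of_ne_one (w := w) fun h => by simp [h] at hlen
    obtain rfl : u = j := (hdesc w hw hlen.le u hu).resolve_left <| by
      rintro rfl; simp only [IsRightDescent, hi] at hu; omega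
    have hw' : w * cs.simple u ∈ WP M cs {u, i} := by
      rw [Set.pair_comm]; exact mul_mem hw (simple_mem_WP (by simp))
    have hlen' : cs.length (w * cs.simple u) = k := by
      have := cs.length_mul_simple w u
      simp only [IsRightDescent] at hu
      omega
    have := ih hw' hlen' (by simp [hlen]) fun w' hw' hle v hv =>
      (hdesc w' (by rwa [Set.pair_comm]) (by omega) v hv).symm
    rw [alternatingWord_succ, wordProd_concat, ← this, cs.simple_mul_simple_cancel_right]

lemma w0_mem_WP (L : Set S) : w0 M cs L ∈ WP M cs L := by
  rw [w0]
  split_ifs with h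
  exacts [h.choose_spec.1, one_mem _]

lemma length_le_length_w0 {L : Set S} (h : FiniteType M cs L) {u : W} (hu : u ∈ WP M cs L) :
    cs.length u ≤ cs.length (w0 M cs L) := by
  obtain ⟨b, hb, hmax⟩ := Set.exists_max_image _ cs.length h ⟨1, one_mem _⟩
  have hex : ∃ w ∈ WP M cs L, ∀ u ∈ WP M cs L, cs.length u ≤ cs.length w := ⟨b, hb, hmax⟩
  rw [w0, dif_pos hex]
  exact hex.choose_spec.2 u hu

variable [MulAction W (GV S)]

lemma alpha_mem_Phi (s : S) : alpha s ∈ Phi M cs := ⟨1, s, (one_smul _ _).symm⟩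

lemma smul_mem_Phi (w : W) {γ : GV S} (h : γ ∈ Phi M cs) : w • γ ∈ Phi M cs := by
  obtain ⟨u, s, rfl⟩ := h
  exact ⟨w * u, s, (mul_smul w u _).symm⟩

namespace GeomAction

lemma smul_add (hact : GeomAction M cs) (w : W) (u v : GV S) : w • (u + v) = w • u + w • v := by
  induction w using cs.simple_induction generalizing u v with
  | simple i => rw [hact, hact, hact, form_add_right]; module
  | one => simp
  | mul a b ha hb => rw [mul_smul, mul_smul, mul_smul, hb, ha]

lemma smul_comm (hact : GeomAction M cs) (w : W) (r : ℝ) (v : GV S) :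
    w • (r • v) = r • (w • v) := by
  induction w using cs.simple_induction generalizing v with
  | simple i => rw [hact, hact, form_smul_right]; module
  | one => simp
  | mul a b ha hb => rw [mul_smul, mul_smul, hb, ha]

def toLinearMap (hact : GeomAction M cs) (w : W) : GV S →ₗ[ℝ] GV S where
  toFun v := w • v
  map_add' := hact.smul_add w
  map_smul' := hact.smul_comm w

lemma toLinearMap_apply (hact : GeomAction M cs) (w : W) (v : GV S) :
    hact.toLinearMap w v = w • v := rfl

lemma smul_neg (hact : GeomAction M cs) (w : W) (v : GV S) : w • (-v) = -(w • v) :=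
  map_neg (hact.toLinearMap w) v

lemma smul_sub (hact : GeomAction M cs) (w : W) (u v : GV S) : w • (u - v) = w • u - w • v :=
  map_sub (hact.toLinearMap w) u v

lemma smul_eq_sum (hact : GeomAction M cs) (w : W) (v : GV S) :
    w • v = v.sum fun k a => a • (w • alpha k) := by
  conv_lhs => rw [← sum_smul_alpha v, ← hact.toLinearMap_apply, map_finsuppSum]
  simp [toLinearMap_apply]

lemma form_smul_smul (hact : GeomAction M cs) (w : W) (u v : GV S) :
    form M (w • u) (w • v) = form M u v := by
  induction w using cs.simple_induction generalizing u v with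
  | simple i =>
    rw [hact, hact, form_sub_smul_sub_smul, form_comm u (alpha i), form_alpha_alpha, cform_self]
    ring
  | one => simp
  | mul a b ha hb => rw [mul_smul, mul_smul, ha, hb]

lemma simple_smul_alpha (hact : GeomAction M cs) (i j : S) :
    cs.simple i • alpha j = alpha j - (2 * cform M i j) • alpha i := by
  rw [hact, form_alpha_alpha]

lemma simple_smul_alpha_self (hact : GeomAction M cs) (i : S) :
    cs.simple i • alpha i = -alpha i := by
  rw [hact.simple_smul_alpha, cform_self]; module

lemma mul_simple_smul_alpha (hact : GeomAction M cs) (w : W) (i : S) :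
    (w * cs.simple i) • alpha i = -(w • alpha i) := by
  rw [mul_smul, hact.simple_smul_alpha_self, hact.smul_neg]

lemma smul_apply_of_notMem (hact : GeomAction M cs) {X : Set S} {w : W} (hw : w ∈ WP M cs X)
    (v : GV S) {r : S} (hr : r ∉ X) : (w • v) r = v r := by
  induction hw using Subgroup.closure_induction generalizing v with
  | mem _ h =>
    obtain ⟨i, hi, rfl⟩ := h
    rw [hact]
    simp [alpha_apply_of_ne (show r ≠ i by rintro rfl; exact hr hi)]
  | one => simp
  | mul a b _ _ ha hb => rw [mul_smul, ha, hb]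
  | inv a _ ha => rw [← ha, smul_inv_smul]

lemma smul_mem_supported (hact : GeomAction M cs) {K : Set S} {w : W} (hw : w ∈ WP M cs K)
    {v : GV S} (hv : v ∈ Finsupp.supported ℝ ℝ K) : w • v ∈ Finsupp.supported ℝ ℝ K := by
  rw [Finsupp.mem_supported'] at hv ⊢
  intro r hr
  rw [hact.smul_apply_of_notMem hw v hr, hv r hr]

lemma simple_injective (hact : GeomAction M cs) : Function.Injective cs.simple := by
  intro a b hab
  by_contra hne
  have h := congrArg (· a) (hab ▸ hact.simple_smul_alpha_self a)
  norm_num [hact.simple_smul_alpha, alpha_apply_self, alpha_apply_of_ne hne] at h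

lemma finite_of_finiteType (hact : GeomAction M cs) {K : Set S} (hK : FiniteType M cs K) :
    K.Finite :=
  Set.Finite.of_finite_image (hK.subset (Set.image_subset_iff.mpr fun _ => simple_mem_WP))
    hact.simple_injective.injOn

open CoxeterSystem in
lemma wordProd_alternatingWord_smul_alpha (hact : GeomAction M cs) (k : ℕ) (i j : S) :
    cs.wordProd (alternatingWord i j k) • alpha i =
        (if Even k then dihedralRoot M i j k else dihedralRoot M j i k) ∧
    cs.wordProd (alternatingWord i j k) • alpha j =
        -(if Even k then dihedralRoot M i j (k - 1) else dihedralRoot M j i (k - 1)) := by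
  induction k generalizing i j with
  | zero =>
    simp [alternatingWord, dihedralRoot, dihedralCoeff, Polynomial.Chebyshev.U_neg_two]
  | succ k ih =>
    obtain ⟨ih_i, ih_j⟩ := ih j i
    rw [alternatingWord_succ, wordProd_concat, mul_smul, mul_smul, hact.simple_smul_alpha,
      hact.simple_smul_alpha_self, hact.smul_neg, hact.smul_sub, hact.smul_comm, ih_i, ih_j]
    rcases Nat.even_or_odd k with hk | hk
    · simp [hk, Nat.even_add_one, dihedralRoot_add_one, cform_comm]; abel
    · simp [hk, dihedralRoot_add_one, cform_comm, Nat.not_even_iff_odd.mpr hk]; abel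

open CoxeterSystem in
lemma wordProd_alternatingWord_smul_alpha_nonneg (hact : GeomAction M cs) {i j : S}
    (hij : i ≠ j) {k : ℕ} (hred : cs.IsReduced (alternatingWord j i (k + 1))) :
    0 ≤ cs.wordProd (alternatingWord i j k) • alpha i := by
  have hm : M i j = 0 ∨ ((k : ℤ) + 1) ≤ M i j := by
    by_contra! h
    rw [M.symmetric] at h
    exact cs.not_isReduced_alternatingWord j i h.1 (by omega) hred
  rw [(hact.wordProd_alternatingWord_smul_alpha k i j).1]
  split_ifs
  · exact dihedralRoot_nonneg hij (by omega) hm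
  · exact dihedralRoot_nonneg hij.symm (by omega) (by rwa [M.symmetric])

lemma length_mul_simple_of_notMem (hact : GeomAction M cs) {X : Set S} {w : W}
    (hw : w ∈ WP M cs X) {u : S} (hu : u ∉ X)
    (IH : ∀ w' : W, cs.length w' < cs.length w → ∀ r : S,
      cs.length (w' * cs.simple r) = cs.length w' + 1 → 0 ≤ w' • alpha r) :
    cs.length (w * cs.simple u) = cs.length w + 1 := by
  refine (cs.length_mul_simple w u).resolve_right fun hdesc => ?_
  have hpos := IH (w * cs.simple u) (by omega) u (by simp [hdesc])
  rw [hact.mul_simple_smul_alpha] at hpos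
  have := hpos u
  rw [Finsupp.neg_apply, hact.smul_apply_of_notMem hw _ hu, alpha_apply_self] at this
  norm_num at this

open CoxeterSystem in
lemma smul_alpha_nonneg_of_mem_dihedral (hact : GeomAction M cs) {i j : S} (hij : i ≠ j) {w : W}
    (hw : w ∈ WP M cs {i, j}) (hi : cs.length (w * cs.simple i) = cs.length w + 1)
    (hdesc : ∀ w' ∈ WP M cs {i, j}, cs.length w' ≤ cs.length w → ∀ u : S,
      cs.IsRightDescent w' u → u = i ∨ u = j) :
    0 ≤ w • alpha i := by
  have hrep := eq_wordProd_alternatingWord hw rfl hi hdesc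
  refine hrep ▸ hact.wordProd_alternatingWord_smul_alpha_nonneg hij ?_
  rw [CoxeterSystem.IsReduced, alternatingWord_succ, wordProd_concat, ← hrep, hi,
    List.length_concat, length_alternatingWord]

/-- The inductive step of the positivity theorem: factor `w = v x` with `x` in the dihedral
subgroup `⟨s_i, s_j⟩` for a right descent `j` and `v` without right descents in `{i, j}`. -/
lemma smul_alpha_nonneg_of_forall_length_lt (hact : GeomAction M cs) {w : W} {i : S}
    (hi : cs.length (w * cs.simple i) = cs.length w + 1)
    (IH : ∀ w' : W, cs.length w' < cs.length w → ∀ r : S,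
      cs.length (w' * cs.simple r) = cs.length w' + 1 → 0 ≤ w' • alpha r) :
    0 ≤ w • alpha i := by
  rcases eq_or_ne w 1 with rfl | hw1
  · simpa using alpha_nonneg i
  obtain ⟨j, hj⟩ := cs.exists_rightDescent_of_ne_one hw1
  simp only [CoxeterSystem.IsRightDescent] at hj
  have hij : i ≠ j := by rintro rfl; omega
  obtain ⟨v, x, rfl, hx, hlen, hv⟩ := exists_parabolic_factorization (cs := cs) {i, j} w
  have hxi : cs.length (x * cs.simple i) = cs.length x + 1 := by
    refine (cs.length_mul_simple x i).resolve_right fun h => ?_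
    have := cs.length_mul_le v (x * cs.simple i)
    rw [← mul_assoc] at this
    omega
  rcases eq_or_ne v 1 with rfl | hv1
  · simp only [one_mul] at hi hj IH ⊢
    refine hact.smul_alpha_nonneg_of_mem_dihedral hij hx hxi fun w' hw' hle u hu => ?_
    by_contra hu'
    have := hact.length_mul_simple_of_notMem hw' (by simpa using hu')
      fun w'' h => IH w'' (by omega)
    simp only [CoxeterSystem.IsRightDescent] at hu
    omega
  have hx1 : x ≠ 1 := by rintro rfl; have := hv j (by simp); simp at hj; omega
  have hvlt : cs.length v < cs.length (v * x) := by
    have := cs.length_eq_zero_iff.not.mpr hx1; omega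
  have hxlt : cs.length x < cs.length (v * x) := by
    have := cs.length_eq_zero_iff.not.mpr hv1; omega
  have hxα := IH x hxlt i hxi
  rw [mul_smul, hact.smul_eq_sum]
  refine Finsupp.sum_nonneg fun r hr => smul_nonneg (hxα r) (IH v hvlt r (hv r ?_))
  by_contra hr'
  rw [Finsupp.mem_support_iff, hact.smul_apply_of_notMem hx _ hr',
    alpha_apply_of_ne (by rintro rfl; simp at hr')] at hr
  exact hr rfl

theorem smul_alpha_nonneg (hact : GeomAction M cs) {w : W} {i : S}
    (hi : cs.length (w * cs.simple i) = cs.length w + 1) : 0 ≤ w • alpha i := by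
  induction hn : cs.length w using Nat.strong_induction_on generalizing w i with
  | _ n ih =>
    exact hact.smul_alpha_nonneg_of_forall_length_lt hi fun w' hw' r hr =>
      ih _ (hn ▸ hw') hr rfl

lemma smul_alpha_nonpos (hact : GeomAction M cs) {w : W} {i : S}
    (hi : cs.length (w * cs.simple i) + 1 = cs.length w) : w • alpha i ≤ 0 := by
  have h := hact.smul_alpha_nonneg (w := w * cs.simple i) (i := i)
    (by rw [cs.simple_mul_simple_cancel_right]; omega)
  rw [hact.mul_simple_smul_alpha] at h
  exact neg_nonneg.mp h

lemma nonneg_or_nonpos_of_mem_Phi (hact : GeomAction M cs) {γ : GV S} (h : γ ∈ Phi M cs) :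
    0 ≤ γ ∨ γ ≤ 0 := by
  obtain ⟨w, i, rfl⟩ := h
  exact (cs.length_mul_simple w i).imp hact.smul_alpha_nonneg hact.smul_alpha_nonpos

lemma inv_smul_alpha_nonpos (hact : GeomAction M cs) {w : W} {i : S} (hi : cs.IsLeftDescent w i) :
    w⁻¹ • alpha i ≤ 0 := by
  rw [← cs.isRightDescent_inv_iff] at hi
  exact hact.smul_alpha_nonpos ((cs.length_mul_simple _ i).resolve_left (by
    simp only [CoxeterSystem.IsRightDescent] at hi; omega))

lemma neg_mem_Phi (hact : GeomAction M cs) {γ : GV S} (h : γ ∈ Phi M cs) : -γ ∈ Phi M cs := by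
  obtain ⟨u, s, rfl⟩ := h
  exact ⟨u * cs.simple s, s, by rw [hact.mul_simple_smul_alpha]⟩

lemma form_self_of_mem_Phi (hact : GeomAction M cs) {γ : GV S} (h : γ ∈ Phi M cs) :
    form M γ γ = 1 := by
  obtain ⟨u, s, rfl⟩ := h
  rw [hact.form_smul_smul, form_alpha_alpha, cform_self]

lemma ne_zero_of_mem_Phi (hact : GeomAction M cs) {γ : GV S} (h : γ ∈ Phi M cs) : γ ≠ 0 := by
  rintro rfl
  simpa [form] using hact.form_self_of_mem_Phi h

lemma apply_pos_of_forall_form_eq_zero (hact : GeomAction M cs) {K : Set S} {t : S} {γ : GV S}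
    (hγ : γ ∈ Phi M cs) (h0 : 0 ≤ γ) (hγK : γ ∈ Finsupp.supported ℝ ℝ K)
    (hperp : ∀ s ∈ K \ {t}, form M γ (alpha s) = 0) : 0 < γ t := by
  refine (h0 t).lt_of_ne fun ht => ?_
  have h := hact.form_self_of_mem_Phi hγ
  rw [form_eq_sum_right, Finsupp.sum, Finset.sum_eq_zero fun k hk => ?_] at h
  · norm_num at h
  have hkt : k ≠ t := by rintro rfl; exact Finsupp.mem_support_iff.mp hk ht.symm
  rw [hperp k ⟨(Finsupp.mem_supported ℝ γ).mp hγK hk, hkt⟩, mul_zero]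

lemma w0_smul_alpha_nonpos (hact : GeomAction M cs) {L : Set S} (h : FiniteType M cs L) {k : S}
    (hk : k ∈ L) : w0 M cs L • alpha k ≤ 0 :=
  hact.smul_alpha_nonpos <| (cs.length_mul_simple _ k).resolve_left fun h' => by
    have := length_le_length_w0 h (mul_mem (w0_mem_WP L) (simple_mem_WP hk))
    omega

lemma w0_mul_w0_diff_smul_nonpos (hact : GeomAction M cs) {K : Set S} (hK : FiniteType M cs K)
    (t : S) {β : GV S} (hβ : β ∈ Phi M cs) (hβK : β ∈ Finsupp.supported ℝ ℝ K) (ht : 0 < β t) :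
    (w0 M cs K * w0 M cs (K \ {t})) • β ≤ 0 := by
  have hw := w0_mem_WP (cs := cs) (K \ {t})
  set β' := w0 M cs (K \ {t}) • β
  have hβ't : β' t = β t := hact.smul_apply_of_notMem hw β (by simp)
  have hβ'0 : 0 ≤ β' := (hact.nonneg_or_nonpos_of_mem_Phi (smul_mem_Phi _ hβ)).resolve_right
    fun h => by
      have : β' t ≤ 0 := h t
      linarith
  have hβ'K : β' ∈ Finsupp.supported ℝ ℝ K :=
    hact.smul_mem_supported (WP_mono Set.sdiff_subset hw) hβK
  rw [mul_smul, hact.smul_eq_sum]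
  exact Finsupp.sum_nonpos fun k hk => smul_nonpos_of_nonneg_of_nonpos (hβ'0 k)
    (hact.w0_smul_alpha_nonpos hK ((Finsupp.mem_supported ℝ β').mp hβ'K hk))

/-- A simple reflection `s_k` changes the coordinate sum of `q` by `-2⟨α_k, q⟩`, so a point of
the finite orbit `W_K · p` maximising the coordinate sum is dominant for `W_K`. -/
lemma exists_dominant_smul (hact : GeomAction M cs) {K : Set S} (hK : FiniteType M cs K)
    (p : GV S) : ∃ g ∈ WP M cs K, ∀ k ∈ K, 0 ≤ form M (alpha k) (g • p) := by
  set L := Finsupp.linearCombination ℝ fun _ : S => (1 : ℝ)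
  obtain ⟨g, hg, hmax⟩ := Set.exists_max_image _ (fun g => L (g • p)) hK ⟨1, one_mem _⟩
  refine ⟨g, hg, fun k hk => ?_⟩
  have h := hmax _ (mul_mem (simple_mem_WP hk) hg)
  have hL : L (alpha k) = 1 := by simp [L, alpha]
  rw [mul_smul, hact, map_sub, L.map_smul, hL, smul_eq_mul, mul_one] at h
  linarith

lemma exists_form_inv_smul_alpha_eq_zero (hact : GeomAction M cs) {K : Set S} {w : W}
    (hw : w ∈ WP M cs K) (hw1 : w ≠ 1) {q : GV S} (hq : ∀ k ∈ K, 0 ≤ form M (alpha k) q)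
    (hfix : w • q = q) : ∃ k ∈ K, form M (w⁻¹ • alpha k) q = 0 := by
  obtain ⟨k, hk⟩ := cs.exists_leftDescent_of_ne_one hw1
  have hneg := hact.inv_smul_alpha_nonpos hk
  have hkK : k ∈ K := by
    by_contra hkK
    have := hneg k
    rw [hact.smul_apply_of_notMem (inv_mem hw) _ hkK, alpha_apply_self] at this
    norm_num at this
  have hsupp := hact.smul_mem_supported (inv_mem hw) (alpha_mem_supported hkK)
  refine ⟨k, hkK, le_antisymm ?_ ?_⟩
  · rw [form_eq_sum_left]
    exact Finsupp.sum_nonpos fun r hr => mul_nonpos_of_nonpos_of_nonneg (hneg r)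
      (hq r ((Finsupp.mem_supported ℝ _).mp hsupp hr))
  · rw [← hact.form_smul_smul w, smul_inv_smul, hfix]
    exact hq k hkK

theorem exists_root_orthogonal_of_fixes (hact : GeomAction M cs) {K : Set S}
    (hK : FiniteType M cs K) {w : W} (hw : w ∈ WP M cs K) (hw1 : w ≠ 1) {X : Set (GV S)}
    (hfix : ∀ x ∈ X, w • x = x) :
    ∃ γ ∈ Phi M cs, 0 ≤ γ ∧ γ ∈ Finsupp.supported ℝ ℝ K ∧ ∀ x ∈ X, form M γ x = 0 := by
  set N := (fun a : W × S => a.1 • alpha a.2) '' ((WP M cs K : Set W) ×ˢ K)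
  obtain ⟨p, hp, hgen⟩ := exists_mem_forall_form_ne_zero (M := M)
    ((hK.prod (hact.finite_of_finiteType hK)).image _ : N.Finite) (Submodule.span ℝ X)
  obtain ⟨g, hg, hdom⟩ := hact.exists_dominant_smul hK p
  have hfix' : (g * w * g⁻¹) • (g • p) = g • p := by
    have hp' : p ∈ (hact.toLinearMap w).eqLocus LinearMap.id :=
      Submodule.span_le.mpr (fun x hx => hfix x hx) hp
    have : w • p = p := hp'
    simp [mul_smul, this]
  obtain ⟨k, hk, hzero⟩ := hact.exists_form_inv_smul_alpha_eq_zero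
    (mul_mem (mul_mem hg hw) (inv_mem hg)) (by simpa using hw1) hdom hfix'
  set γ := (g * w)⁻¹ • alpha k
  have hγN : γ ∈ N := ⟨((g * w)⁻¹, k), ⟨inv_mem (mul_mem hg hw), hk⟩, rfl⟩
  have hγp : form M γ p = 0 := by
    rw [← hact.form_smul_smul g, ← hzero]
    congr 1
    simp [γ, mul_smul]
  have hperp (x) (hx : x ∈ X) : form M γ x = 0 := by
    by_contra hne
    exact hgen γ hγN ⟨x, Submodule.subset_span hx, hne⟩ hγp
  have hγΦ : γ ∈ Phi M cs := smul_mem_Phi _ (alpha_mem_Phi k)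
  have hγK := hact.smul_mem_supported (inv_mem (mul_mem hg hw)) (alpha_mem_supported hk)
  rcases hact.nonneg_or_nonpos_of_mem_Phi hγΦ with h | h
  · exact ⟨γ, hγΦ, h, hγK, hperp⟩
  · refine ⟨-γ, hact.neg_mem_Phi hγΦ, neg_nonneg.mpr h, neg_mem hγK, fun x hx => ?_⟩
    rw [← formBilin_apply, map_neg, LinearMap.neg_apply, formBilin_apply, hperp x hx, neg_zero]

end GeomAction

variable {Λ : Type*} {u : W} {y z : SInj S Λ} {J : Set S}

lemma SemiStd.ts_mem_Ks (D : SemiStd M cs Λ u y z J) (i : Fin D.n) : D.ts i ∈ D.Ks i := by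
  rw [D.h_K i]
  exact ⟨Or.inr rfl, _, rfl, .refl⟩

lemma SemiStd.om_mem_WP (D : SemiStd M cs Λ u y z J) (i : Fin D.n) :
    D.om i ∈ WP M cs (D.Ks i) := by
  rw [D.h_om i]
  exact mul_mem (w0_mem_WP _) (WP_mono Set.sdiff_subset (w0_mem_WP _))

lemma SemiStd.form_alpha_eq_zero_of_mem_rng (D : SemiStd M cs Λ u y z J) (i : Fin D.n)
    {γ : GV S} (hγK : γ ∈ Finsupp.supported ℝ ℝ (D.Ks i))
    (hperp : ∀ s ∈ D.Ks i \ {D.ts i}, form M γ (alpha s) = 0) :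
    ∀ r ∈ rng (D.ys i.castSucc), form M γ (alpha r) = 0 := by
  intro r hr
  rw [D.h_K i] at hγK hperp
  exact form_alpha_eq_zero_of_mem_sTilde hγK hperp (Or.inl hr)
    fun h => D.h_t_notin i (h ▸ Or.inl hr)

/-- For any semi-standard decomposition `ω_{n-1} ⋯ ω_1 ω_0` of an element of `W`,
for each `0 ≤ i ≤ n-1` there exists an element of `Π_{K^{(i)} ∖ {t^{(i)}}}` which is
not fixed by `ω_i`. -/
theorem semistandard_component_moves_some_root {S W : Type*} [Group W] (M : CoxeterMatrix S)
    (cs : CoxeterSystem M W) [MulAction W (GV S)] (hact : GeomAction M cs) {Λ : Type*}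
    {u : W} {y z : SInj S Λ} {J : Set S} (D : SemiStd M cs Λ u y z J) :
    ∀ i : Fin D.n, ∃ s ∈ D.Ks i \ {D.ts i}, D.om i • alpha s ≠ alpha s := by
  intro i
  by_contra! hfix
  have hK := D.h_K_fin i
  have hneg {β : GV S} (hβ : β ∈ Phi M cs) (hβK : β ∈ Finsupp.supported ℝ ℝ (D.Ks i))
      (hβt : 0 < β (D.ts i)) : D.om i • β ≤ 0 :=
    D.h_om i ▸ hact.w0_mul_w0_diff_smul_nonpos hK _ hβ hβK hβt
  have hω1 : D.om i ≠ 1 := fun h => by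
    have := hneg (alpha_mem_Phi _) (alpha_mem_supported (D.ts_mem_Ks i))
      (by simp [alpha_apply_self]) (D.ts i)
    norm_num [h, alpha_apply_self] at this
  obtain ⟨γ, hγ, hγ0, hγK, hperp⟩ := hact.exists_root_orthogonal_of_fixes hK (D.om_mem_WP i) hω1
    (X := alpha '' (D.Ks i \ {D.ts i})) (by rintro _ ⟨s, hs, rfl⟩; exact hfix s hs)
  replace hperp : ∀ s ∈ D.Ks i \ {D.ts i}, form M γ (alpha s) = 0 :=
    fun s hs => hperp _ ⟨s, hs, rfl⟩
  have hpos := (D.h_Y i).2 γ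
    ⟨⟨⟨hγ, by simp⟩, D.form_alpha_eq_zero_of_mem_rng i hγK hperp⟩, hγ, fun s => hγ0 s⟩
  exact hact.ne_zero_of_mem_Phi (smul_mem_Phi _ hγ) <| le_antisymm
    (hneg hγ hγK (hact.apply_pos_of_forall_form_eq_zero hγ hγ0 hγK hperp)) fun s => hpos.2 s

end CoxeterCentralizer
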